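/- Let (X,d) be a δ-hyperbolic metric space, P ⊆ X a finite nonempty set, p₁ ∈ P, â a point of P farthest from p₁, and b̂ a point of P farthest from â. Then d(â,b̂) ≤ diam(P) ≤ d(â,b̂) + 2δ. -/
import Mathlib


noncomputable def gromovProd {X : Type*} [MetricSpace X] (t u v : X) : ℝ :=
  (dist u t + dist v t - dist u v) / 2

def IsDeltaHyperbolic (X : Type*) [MetricSpace X] (δ : ℝ) : Prop :=
  ∀ t u v w : X, gromovProd t u w ≥ min (gromovProd t u v) (gromovProd t v w) - δ

theorem approx_diametral_pair {X : Type*} [MetricSpace X] {δ : ℝ}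
    (hX : IsDeltaHyperbolic X δ) (P : Finset X) (hP : P.Nonempty)
    (p₁ ahat bhat astar bstar : X)
    (hp₁ : p₁ ∈ P) (hahat : ahat ∈ P) (hbhat : bhat ∈ P)
    (hastar : astar ∈ P) (hbstar : bstar ∈ P)
    (hahat_far : ∀ p ∈ P, dist p₁ p ≤ dist p₁ ahat)
    (hbhat_far : ∀ p ∈ P, dist ahat p ≤ dist ahat bhat)
    (hdiam : ∀ p ∈ P, ∀ q ∈ P, dist p q ≤ dist astar bstar) :
    dist ahat bhat ≤ dist astar bstar ∧
      dist astar bstar ≤ dist ahat bhat + 2 * δ := by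
  refine ⟨hdiam ahat hahat bhat hbhat, ?_⟩
  have h := hX p₁ astar ahat bstar
  have h1 := hahat_far astar hastar
  have h2 := hahat_far bstar hbstar
  have h3 := hbhat_far astar hastar
  have h4 := hbhat_far bstar hbstar
  simp only [gromovProd, ge_iff_le] at h
  have e1 : dist astar p₁ = dist p₁ astar := dist_comm _ _
  have e2 : dist bstar p₁ = dist p₁ bstar := dist_comm _ _
  have e3 : dist ahat p₁ = dist p₁ ahat := dist_comm _ _
  have e4 : dist astar ahat = dist ahat astar := dist_comm _ _
  have e5 : dist ahat bstar = dist ahat bstar := rfl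
  rcases le_total ((dist astar p₁ + dist ahat p₁ - dist astar ahat) / 2)
      ((dist ahat p₁ + dist bstar p₁ - dist ahat bstar) / 2) with hc | hc
  · rw [min_eq_left hc] at h
    linarith
  · rw [min_eq_right hc] at h
    linarith
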